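/- arXiv:2512.05939 — 2 statements merged into one kernel-verified Lean document; each statement's English description precedes it below -/
import Mathlib

section
/- With E, a_φ, K as above and K entrywise nonnegative, let φ lie on the constraint manifold (‖φ_j‖²_{L²} = N_j for all j) and let z be tangent at φ (Re⟨φ_j, z_j⟩_{L²} = 0 for all j). Set ψ = φ + z and let Σ be the diagonal matrix with Σ_{jj} = (1 + ‖z_j‖²_{L²}/N_j)^{-1/2}, so that ψΣ is the retraction R_φ(z). Then E(φ + z) − E(R_φ(z)) ≥ 0, i.e. renormalizing never increases the energy. -/
open Matrix MeasureTheory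

theorem stmt12 {X : Type*} [MeasurableSpace X] (μ : Measure X) {p : ℕ}
    (K : Matrix (Fin p) (Fin p) ℝ) (hKsym : K.IsSymm) (hKpos : ∀ i j, 0 ≤ K i j)
    (Q : Fin p → (X → ℂ) → ℝ)
    (hQnn : ∀ j f, 0 ≤ Q j f)
    (hQsc : ∀ (j : Fin p) (c : ℝ) (f : X → ℂ),
      Q j (fun x => (c : ℂ) * f x) = c ^ 2 * Q j f)
    (E : (Fin p → X → ℂ) → ℝ)
    (hE : ∀ f, E f = (1 / 2) * ∑ j, Q j (f j)
      + (1 / 4) * ∫ x, (fun j => ‖f j x‖ ^ 2) ⬝ᵥ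
          K.mulVec (fun j => ‖f j x‖ ^ 2) ∂μ)
    (N : Fin p → ℝ) (hN : ∀ j, 0 < N j)
    (φ z : Fin p → X → ℂ)
    (hmass : ∀ j, ∫ x, ‖φ j x‖ ^ 2 ∂μ = N j)
    (htan : ∀ j, ∫ x, (φ j x * (starRingEnd ℂ) (z j x)).re ∂μ = 0)
    (hzint : ∀ j, Integrable (fun x => ‖z j x‖ ^ 2) μ)
    (Sig : Fin p → ℝ)
    (hSig : ∀ j, Sig j = (Real.sqrt (1 + (∫ x, ‖z j x‖ ^ 2 ∂μ) / N j))⁻¹)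
    (ψ : Fin p → X → ℂ) (hψ : ∀ j x, ψ j x = φ j x + z j x)
    (hqint : ∀ i j, Integrable (fun x => ‖ψ i x‖ ^ 2 * ‖ψ j x‖ ^ 2) μ) :
    0 ≤ E ψ - E (fun j x => (Sig j : ℂ) * ψ j x) := by

  have ht : ∀ j, 0 ≤ ∫ x, ‖z j x‖ ^ 2 ∂μ := fun j => integral_nonneg fun x => sq_nonneg _
  have hSig0 : ∀ j, 0 ≤ Sig j := fun j => by rw [hSig j]; positivity
  have hSig1 : ∀ j, Sig j ≤ 1 := by
    intro j
    rw [hSig j]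
    have h0 : (0:ℝ) ≤ (∫ x, ‖z j x‖ ^ 2 ∂μ) / N j := div_nonneg (ht j) (hN j).le
    have h1 : (1:ℝ) ≤ Real.sqrt (1 + (∫ x, ‖z j x‖ ^ 2 ∂μ) / N j) := by
      have := Real.sqrt_le_sqrt (show (1:ℝ) ≤ 1 + (∫ x, ‖z j x‖ ^ 2 ∂μ) / N j by linarith)
      simpa using this
    exact inv_le_one_of_one_le₀ h1
  have hSig2 : ∀ j, Sig j ^ 2 ≤ 1 := fun j => pow_le_one₀ (hSig0 j) (hSig1 j)
  have hnorm : ∀ j x, ‖(Sig j : ℂ) * ψ j x‖ ^ 2 = Sig j ^ 2 * ‖ψ j x‖ ^ 2 := by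
    intro j x
    rw [norm_mul, mul_pow, Complex.norm_real, Real.norm_eq_abs, sq_abs]
  rw [hE, hE]
  have hsum : ∑ j, Q j (fun x => (Sig j : ℂ) * ψ j x) ≤ ∑ j, Q j (ψ j) := by
    apply Finset.sum_le_sum
    intro j _
    rw [hQsc]
    calc Sig j ^ 2 * Q j (ψ j) ≤ 1 * Q j (ψ j) :=
          mul_le_mul_of_nonneg_right (hSig2 j) (hQnn j _)
      _ = Q j (ψ j) := one_mul _
  have hFeq : ∀ x, (fun j => ‖ψ j x‖ ^ 2) ⬝ᵥ K.mulVec (fun j => ‖ψ j x‖ ^ 2)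
      = ∑ i, ∑ j, K i j * (‖ψ i x‖ ^ 2 * ‖ψ j x‖ ^ 2) := by
    intro x
    simp only [dotProduct, Matrix.mulVec, Finset.mul_sum]
    exact Finset.sum_congr rfl fun i _ => Finset.sum_congr rfl fun j _ => by ring
  have hGeq : ∀ x, (fun j => ‖(Sig j : ℂ) * ψ j x‖ ^ 2) ⬝ᵥ
        K.mulVec (fun j => ‖(Sig j : ℂ) * ψ j x‖ ^ 2)
      = ∑ i, ∑ j, (K i j * (Sig i ^ 2 * Sig j ^ 2)) * (‖ψ i x‖ ^ 2 * ‖ψ j x‖ ^ 2) := by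
    intro x
    simp only [dotProduct, Matrix.mulVec, hnorm, Finset.mul_sum]
    exact Finset.sum_congr rfl fun i _ => Finset.sum_congr rfl fun j _ => by ring
  have hFint : Integrable (fun x => ∑ i, ∑ j, K i j * (‖ψ i x‖ ^ 2 * ‖ψ j x‖ ^ 2)) μ := by
    apply integrable_finset_sum
    intro i _
    apply integrable_finset_sum
    intro j _
    exact (hqint i j).const_mul _
  have hGint : Integrable (fun x => ∑ i, ∑ j,
      (K i j * (Sig i ^ 2 * Sig j ^ 2)) * (‖ψ i x‖ ^ 2 * ‖ψ j x‖ ^ 2)) μ := by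
    apply integrable_finset_sum
    intro i _
    apply integrable_finset_sum
    intro j _
    exact (hqint i j).const_mul _
  have hint : (∫ x, (fun j => ‖(Sig j : ℂ) * ψ j x‖ ^ 2) ⬝ᵥ
        K.mulVec (fun j => ‖(Sig j : ℂ) * ψ j x‖ ^ 2) ∂μ)
      ≤ ∫ x, (fun j => ‖ψ j x‖ ^ 2) ⬝ᵥ K.mulVec (fun j => ‖ψ j x‖ ^ 2) ∂μ := by
    simp only [hFeq, hGeq]
    apply integral_mono hGint hFint
    intro x
    apply Finset.sum_le_sum
    intro i _
    apply Finset.sum_le_sum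
    intro j _
    apply mul_le_mul_of_nonneg_right _ (by positivity)
    calc K i j * (Sig i ^ 2 * Sig j ^ 2) ≤ K i j * 1 :=
          mul_le_mul_of_nonneg_left
            (by nlinarith [hSig2 i, hSig2 j, sq_nonneg (Sig i), sq_nonneg (Sig j)]) (hKpos i j)
      _ = K i j := mul_one _
  linarith
end

section
/- Let H be a real Hilbert space, L : H → H a bounded symmetric linear operator satisfying a Gårding inequality ⟨Lξ,ξ⟩ ≥ α‖ξ‖² − β‖ξ‖_W² for all ξ ∈ H, where α, β > 0 and ‖·‖_W is a norm in which the embedding H ↪ W is compact. If additionally L is injective (⟨Lξ,ξ⟩ > 0 for all ξ ≠ 0), then L is bijective with bounded inverse, and consequently L satisfies the inf–sup condition: there exists γ > 0 with inf_{ζ≠0} sup_{ξ≠0} ⟨Lξ,ζ⟩/(‖ξ‖‖ζ‖) ≥ γ. -/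
/-!
Adding the compact operator `K = β ι*ι` to `L` gives an operator `T = L + K` that is coercive by
the Gårding inequality, hence invertible by Lax–Milgram. Then `L = T - K` is a compact perturbation
of an invertible operator, and the Fredholm alternative turns injectivity of `L` into
invertibility. Testing with `ξ = L⁻¹ ζ` gives the inf–sup constant `γ = 1 / ‖L⁻¹‖`.
-/

open RealInnerProductSpace

namespace IsCompactOperator

variable {𝕜 X : Type*} [NontriviallyNormedField 𝕜] [NormedAddCommGroup X] [NormedSpace 𝕜 X]

/-- Writing `T - K = T (1 - T⁻¹ K)` with `T⁻¹ K` compact, this is the Fredholm alternative at the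
eigenvalue `1` of `T⁻¹ K`. -/
theorem isUnit_sub_of_injective [CompleteSpace X] {T K : X →L[𝕜] X} (hT : IsUnit T)
    (hK : IsCompactOperator K) (hinj : Function.Injective (T - K)) : IsUnit (T - K) := by
  obtain ⟨u, rfl⟩ := hT
  have hfactor : (u : X →L[𝕜] X) - K = u * (1 - ↑u⁻¹ * K) := by
    rw [mul_sub, mul_one, ← mul_assoc, Units.mul_inv, one_mul]
  have hnot_eigenvalue :
      ¬ Module.End.HasEigenvalue ((↑u⁻¹ * K : X →L[𝕜] X) : Module.End 𝕜 X) 1 := by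
    intro h
    obtain ⟨x, hx⟩ := h.exists_hasEigenvector
    have hfixed : (↑u⁻¹ * K) x = x := by simpa using hx.apply_eq_smul
    refine hx.2 (hinj ?_)
    rw [hfactor, map_zero]
    simp [hfixed]
  have hresolvent := ((hK.clm_comp _).hasEigenvalue_or_mem_resolventSet one_ne_zero).resolve_left
    hnot_eigenvalue
  rw [spectrum.mem_resolventSet_iff, map_one] at hresolvent
  rw [hfactor]
  exact u.isUnit.mul hresolvent

end IsCompactOperator

section Hilbert

variable {H : Type*} [NormedAddCommGroup H] [InnerProductSpace ℝ H]

theorem ContinuousLinearMap.isUnit_of_coercive [CompleteSpace H] (T : H →L[ℝ] H) {c : ℝ}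
    (hc : 0 < c) (hT : ∀ x, c * ‖x‖ ^ 2 ≤ ⟪T x, x⟫) : IsUnit T := by
  have coercive : IsCoercive ((innerSL ℝ).comp T) :=
    ⟨c, hc, fun x => by simpa [sq, mul_assoc] using hT x⟩
  refine ⟨coercive.continuousLinearEquivOfBilin.toUnit, ?_⟩
  ext x
  exact ext_inner_right ℝ fun y => coercive.continuousLinearEquivOfBilin_apply x y

theorem ContinuousLinearEquiv.exists_inf_sup_bound (e : H ≃L[ℝ] H) :
    ∃ γ > 0, ∀ ζ : H, ζ ≠ 0 → ∃ ξ : H, ξ ≠ 0 ∧ γ * (‖ξ‖ * ‖ζ‖) ≤ ⟪e ξ, ζ⟫ := by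
  rcases e.subsingleton_or_norm_symm_pos with hH | hpos
  · exact ⟨1, one_pos, fun ζ hζ => absurd (Subsingleton.elim ζ 0) hζ⟩
  set C := ‖(e.symm : H →L[ℝ] H)‖
  refine ⟨C⁻¹, inv_pos.2 hpos, fun ζ hζ => ⟨e.symm ζ, by simpa using hζ, ?_⟩⟩
  calc C⁻¹ * (‖e.symm ζ‖ * ‖ζ‖) ≤ C⁻¹ * (C * ‖ζ‖ * ‖ζ‖) := by
        gcongr
        exact (e.symm : H →L[ℝ] H).le_opNorm ζ
    _ = ⟪ζ, ζ⟫ := by rw [real_inner_self_eq_norm_mul_norm]; field_simp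
    _ = ⟪e (e.symm ζ), ζ⟫ := by rw [e.apply_symm_apply]

theorem ContinuousLinearMap.isUnit_of_garding {W : Type*} [CompleteSpace H]
    [NormedAddCommGroup W] [InnerProductSpace ℝ W] [CompleteSpace W]
    (L : H →L[ℝ] H) (ι : H →L[ℝ] W) (hι : IsCompactOperator ι) {α β : ℝ} (hα : 0 < α)
    (hgard : ∀ ξ, α * ‖ξ‖ ^ 2 - β * ‖ι ξ‖ ^ 2 ≤ ⟪L ξ, ξ⟫) (hinj : Function.Injective L) :
    IsUnit L := by
  set K : H →L[ℝ] H := (β • ContinuousLinearMap.adjoint ι) ∘L ι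
  have hK : IsCompactOperator K := hι.clm_comp (β • ContinuousLinearMap.adjoint ι)
  have hinner (ξ : H) : ⟪K ξ, ξ⟫ = β * ‖ι ξ‖ ^ 2 := by
    simp [K, real_inner_smul_left, ContinuousLinearMap.adjoint_inner_left]
  have hcoercive : IsUnit (L + K) := (L + K).isUnit_of_coercive hα fun ξ => by
    rw [add_apply, inner_add_left, hinner]
    linarith [hgard ξ]
  simpa using IsCompactOperator.isUnit_sub_of_injective hcoercive hK (by simpa using hinj)

end Hilbert

theorem stmt13_general {H W : Type*}
    [NormedAddCommGroup H] [InnerProductSpace ℝ H] [CompleteSpace H]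
    [NormedAddCommGroup W] [InnerProductSpace ℝ W] [CompleteSpace W]
    (L : H →L[ℝ] H)
    (ι : H →L[ℝ] W) (hι : IsCompactOperator ι)
    (α β : ℝ) (hα : 0 < α)
    (hgard : ∀ ξ : H, α * ‖ξ‖ ^ 2 - β * ‖ι ξ‖ ^ 2 ≤ ⟪L ξ, ξ⟫)
    (hpos : ∀ ξ : H, ξ ≠ 0 → 0 < ⟪L ξ, ξ⟫) :
    (∃ e : H ≃L[ℝ] H, (e : H → H) = L) ∧
    ∃ γ > 0, ∀ ζ : H, ζ ≠ 0 → ∃ ξ : H, ξ ≠ 0 ∧ γ * (‖ξ‖ * ‖ζ‖) ≤ ⟪L ξ, ζ⟫ := by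
  have hinj : Function.Injective L := (injective_iff_map_eq_zero L).2 fun ξ hξ => by
    by_contra hξ0
    simpa [hξ] using hpos ξ hξ0
  obtain ⟨u, rfl⟩ := L.isUnit_of_garding ι hι hα hgard hinj
  let e := ContinuousLinearEquiv.unitsEquiv ℝ H u
  exact ⟨⟨e, rfl⟩, e.exists_inf_sup_bound⟩

theorem stmt13 {H W : Type*}
    [NormedAddCommGroup H] [InnerProductSpace ℝ H] [CompleteSpace H]
    [NormedAddCommGroup W] [InnerProductSpace ℝ W] [CompleteSpace W]
    (L : H →L[ℝ] H) (hsym : ∀ x y : H, ⟪L x, y⟫ = ⟪x, L y⟫)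
    (ι : H →L[ℝ] W) (hι : IsCompactOperator ι)
    (α β : ℝ) (hα : 0 < α) (hβ : 0 < β)
    (hgard : ∀ ξ : H, α * ‖ξ‖ ^ 2 - β * ‖ι ξ‖ ^ 2 ≤ ⟪L ξ, ξ⟫)
    (hpos : ∀ ξ : H, ξ ≠ 0 → 0 < ⟪L ξ, ξ⟫) :
    (∃ e : H ≃L[ℝ] H, (e : H → H) = L) ∧
    ∃ γ > 0, ∀ ζ : H, ζ ≠ 0 → ∃ ξ : H, ξ ≠ 0 ∧ γ * (‖ξ‖ * ‖ζ‖) ≤ ⟪L ξ, ζ⟫ :=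
  stmt13_general L ι hι α β hα hgard hpos
end
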